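/- Let L > 0, α > 0, c > 0, a > 0, P₁, G₀ ∈ ℝ, and x_new ∈ ℝ with 0 < x_new. Fix x ≥ x_new and a time t > π²/(3α). Define, for a withdrawal increment G_new ∈ ℝ, P(x,t; G_new) = P₁ − a·G₀·L + 2a·G₀·L·Σ_{n=1}^∞ sin(πnx/L)·(1 − e^{−α n² t})/(π n³) − (c² t/L)·(G₀ + G_new) − (2c²/L)·(G₀ + G_new)·Σ_{n=1}^∞ cos(2πn(x − x_new)/L)·(1 − e^{−α n² t})/(α n²). Then the map G_new ↦ P(x,t; G_new) is strictly decreasing on ℝ. -/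
import Mathlib


open Real

lemma hasSum_succ_sq : HasSum (fun n : ℕ => (1 : ℝ) / ((n : ℝ) + 1) ^ 2) (π ^ 2 / 6) := by
  have h := hasSum_zeta_two
  have h2 := (hasSum_nat_add_iff' (f := fun n : ℕ => (1 : ℝ) / (n : ℝ) ^ 2) 1).2 h
  simpa using h2

/-- For `x ≥ x_new` and `t > π²/(3α)`, the reconstructed ring-pipeline pressure is a
strictly decreasing function of the additional withdrawal rate `G_new`. -/
theorem pressure_strictAnti_in_new_withdrawal (L α c a P₁ G₀ xnew x t : ℝ)
    (hL : 0 < L) (hα : 0 < α) (hc : 0 < c) (ha : 0 < a)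
    (hxnew : 0 < xnew) (hx : xnew ≤ x) (ht : π ^ 2 / (3 * α) < t) :
    StrictAnti (fun Gnew : ℝ =>
      P₁ - a * G₀ * L
        + 2 * a * G₀ * L * ∑' n : ℕ, Real.sin (π * ((n : ℝ) + 1) * x / L) *
            (1 - Real.exp (-α * ((n : ℝ) + 1) ^ 2 * t)) / (π * ((n : ℝ) + 1) ^ 3)
        - (c ^ 2 * t / L) * (G₀ + Gnew)
        - (2 * c ^ 2 / L) * (G₀ + Gnew) *
            ∑' n : ℕ, Real.cos (2 * π * ((n : ℝ) + 1) * (x - xnew) / L) *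
              (1 - Real.exp (-α * ((n : ℝ) + 1) ^ 2 * t)) / (α * ((n : ℝ) + 1) ^ 2)) := by
  set g : ℕ → ℝ := fun n => Real.cos (2 * π * ((n : ℝ) + 1) * (x - xnew) / L) *
      (1 - Real.exp (-α * ((n : ℝ) + 1) ^ 2 * t)) / (α * ((n : ℝ) + 1) ^ 2) with hg
  set S : ℝ := ∑' n : ℕ, g n with hS
  -- bound |g n| ≤ (1/α) * (1/(n+1)^2)
  have hbound : ∀ n : ℕ, |g n| ≤ (1 / α) * (1 / ((n : ℝ) + 1) ^ 2) := by
    intro n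
    have hn : (0:ℝ) < ((n : ℝ) + 1) ^ 2 := by positivity
    have h1 : |Real.cos (2 * π * ((n : ℝ) + 1) * (x - xnew) / L)| ≤ 1 :=
      Real.abs_cos_le_one _
    have htpos : 0 < t := lt_trans (by positivity) ht
    have hexp1 : Real.exp (-α * ((n : ℝ) + 1) ^ 2 * t) ≤ 1 :=
      Real.exp_le_one_iff.mpr (by nlinarith [mul_pos (mul_pos hα hn) htpos])
    have h2 : |1 - Real.exp (-α * ((n : ℝ) + 1) ^ 2 * t)| ≤ 1 := by
      rw [abs_le]
      constructor
      · nlinarith [Real.exp_pos (-α * ((n : ℝ) + 1) ^ 2 * t)]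
      · nlinarith [Real.exp_pos (-α * ((n : ℝ) + 1) ^ 2 * t)]
    calc |g n| = |Real.cos (2 * π * ((n : ℝ) + 1) * (x - xnew) / L)| *
          |1 - Real.exp (-α * ((n : ℝ) + 1) ^ 2 * t)| / |α * ((n : ℝ) + 1) ^ 2| := by
          rw [hg]; rw [abs_div, abs_mul]
      _ ≤ 1 * 1 / (α * ((n : ℝ) + 1) ^ 2) := by
          rw [abs_of_pos (by positivity : (0:ℝ) < α * ((n : ℝ) + 1) ^ 2)]
          gcongr
      _ = (1 / α) * (1 / ((n : ℝ) + 1) ^ 2) := by field_simp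
  have hsum2 : Summable (fun n : ℕ => (1 / α) * (1 / ((n : ℝ) + 1) ^ 2)) :=
    (hasSum_succ_sq.mul_left (1 / α)).summable
  have hsumg : Summable g :=
    Summable.of_abs (hsum2.of_nonneg_of_le (fun n => abs_nonneg _) hbound)
  have habsS : |S| ≤ (1 / α) * (π ^ 2 / 6) := by
    calc |S| ≤ ∑' n, |g n| := by
          simpa [Real.norm_eq_abs] using norm_tsum_le_tsum_norm (f := g)
            (by simpa [Real.norm_eq_abs] using hsumg.abs)
      _ ≤ ∑' n : ℕ, (1 / α) * (1 / ((n : ℝ) + 1) ^ 2) :=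
          Summable.tsum_le_tsum hbound hsumg.abs hsum2
      _ = (1 / α) * (π ^ 2 / 6) := (hasSum_succ_sq.mul_left (1 / α)).tsum_eq
  -- coefficient positive
  have hcoef : 0 < t + 2 * S := by
    have heq : 1 / α * (π ^ 2 / 6) * 2 = π ^ 2 / (3 * α) := by
      field_simp; ring
    have h1 := (abs_le.mp habsS).1
    linarith
  intro u v huv
  simp only
  have hKpos : 0 < c ^ 2 / L * (t + 2 * S) := by positivity
  have hpos : 0 < c ^ 2 / L * (t + 2 * S) * (v - u) :=
    mul_pos hKpos (by linarith)
  have heq : c ^ 2 * t / L * (G₀ + v) + 2 * c ^ 2 / L * (G₀ + v) * S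
      - (c ^ 2 * t / L * (G₀ + u) + 2 * c ^ 2 / L * (G₀ + u) * S)
      = c ^ 2 / L * (t + 2 * S) * (v - u) := by
    field_simp; ring
  linarith
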